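/- Let m, n, k, g be positive integers with g dividing n, and let 0 ≤ r ≤ m. Suppose there exist a g-regular 2-D ([m:r]×n,k,1)-OOC (which necessarily has Υ(m,r,n,g,k) = (m²−r²)(n−g)/(k(k−1)) codewords) and a 2-D ([m:r]×g,k,1)-OOC with b codewords. Then there exists a 2-D ([m:r]×n,k,1)-OOC with Υ(m,r,n,g,k) + b codewords. -/

import Mathlib

/-- The cyclic shift of a codeword `B ⊆ I_m × Z_n` by `τ`. -/
def OOCshift {m n : ℕ} (B : Finset (Fin m × ZMod n)) (τ : ZMod n) :
    Finset (Fin m × ZMod n) :=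
  B.image fun p => (p.1, p.2 + τ)

/-- A two-dimensional `(m × n, k, lam)` optical orthogonal code: a family of
`k`-element codewords of `I_m × Z_n` with auto- and cross-correlation at most `lam`. -/
def IsOOC (m n k lam : ℕ) (C : Finset (Finset (Fin m × ZMod n))) : Prop :=
  (∀ A ∈ C, A.card = k) ∧
  (∀ A ∈ C, ∀ τ : ZMod n, τ ≠ 0 → (A ∩ OOCshift A τ).card ≤ lam) ∧
  (∀ A ∈ C, ∀ B ∈ C, A ≠ B → ∀ τ : ZMod n, (A ∩ OOCshift B τ).card ≤ lam)

/-- The multiset `Δ_{ij}(C)` of all (pure and mixed) `(i,j)`-differences of the family `C`. -/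
def Delta {m n : ℕ} (i j : Fin m) (C : Finset (Finset (Fin m × ZMod n))) :
    Multiset (ZMod n) :=
  ∑ B ∈ C, (((B ×ˢ B).filter fun p => p.1 ≠ p.2 ∧ p.1.1 = i ∧ p.2.1 = j).val.map
      fun p => p.1.2 - p.2.2)

/-- A `g`-regular 2-D `([m : r] × n, k, 1)`-OOC with hole `R × Z_n` (`r = R.card`):
for `{i,j} ⊄ R` the multiset `Δ_{ij}(C)` is exactly `Z_n \ H` (each element once), where
`H = {z : g • z = 0}` is the subgroup of order `g` of `Z_n`, and `Δ_{ij}(C) = ∅` otherwise. -/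
def IsGRegOOC {m n : ℕ} (k g : ℕ) (R : Finset (Fin m))
    (C : Finset (Finset (Fin m × ZMod n))) : Prop :=
  (∀ A ∈ C, A.card = k) ∧
  ∀ i j : Fin m, ∀ z : ZMod n,
    Multiset.count z (Delta i j C) =
      if i ∈ R ∧ j ∈ R then 0 else if g • z = 0 then 0 else 1

/-!
Embed `Z_g` into `Z_n` as the subgroup `H` of order `g` and permute the rows so that the two
holes coincide. The differences of the embedded small code lie in `H` and are pairwise distinct,
while those of the `g`-regular code are exactly `Z_n \ H`, each once. Hence in the union every
difference occurs at most once, which for `λ = 1` is equivalent to the correlation conditions.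
No codeword lies in both families: two of its points would give a difference outside `H` in the
first and inside `H` in the second.
-/

open Finset

section Differences

variable {m n : ℕ}

lemma mem_OOCshift {B : Finset (Fin m × ZMod n)} {τ : ZMod n} {p : Fin m × ZMod n} :
    p ∈ OOCshift B τ ↔ (p.1, p.2 - τ) ∈ B := by
  constructor
  · intro h
    obtain ⟨q, hq, rfl⟩ := mem_image.mp h
    simpa using hq
  · exact fun h => mem_image.mpr ⟨_, h, by simp⟩

def diffPairs (i j : Fin m) (z : ZMod n) (B : Finset (Fin m × ZMod n)) :
    Finset ((Fin m × ZMod n) × (Fin m × ZMod n)) :=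
  (B ×ˢ B).filter fun pq => (pq.1 ≠ pq.2 ∧ pq.1.1 = i ∧ pq.2.1 = j) ∧ z = pq.1.2 - pq.2.2

lemma count_Delta (i j : Fin m) (z : ZMod n) (C : Finset (Finset (Fin m × ZMod n))) :
    (Delta i j C).count z = #(C.sigma (diffPairs i j z)) := by
  rw [Delta, Multiset.count_sum', card_sigma]
  refine sum_congr rfl fun B _ => ?_
  rw [Multiset.count_map, diffPairs, ← filter_val, filter_filter]
  rfl

lemma mem_Delta {C : Finset (Finset (Fin m × ZMod n))} {A : Finset (Fin m × ZMod n)}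
    (hA : A ∈ C) {p q : Fin m × ZMod n} (hp : p ∈ A) (hq : q ∈ A) (hpq : p ≠ q) :
    p.2 - q.2 ∈ Delta p.1 q.1 C :=
  Multiset.mem_sum.mpr ⟨A, hA, Multiset.mem_map.mpr ⟨(p, q), by simp [hp, hq, hpq], rfl⟩⟩

lemma Delta_union {C D : Finset (Finset (Fin m × ZMod n))} (h : Disjoint C D) (i j : Fin m) :
    Delta i j (C ∪ D) = Delta i j C + Delta i j D :=
  sum_union h

def HasUniqueDifferences (C : Finset (Finset (Fin m × ZMod n))) : Prop :=
  ∀ A ∈ C, ∀ B ∈ C, ∀ p ∈ A, ∀ q ∈ A, ∀ p' ∈ B, ∀ q' ∈ B, p ≠ q → p' ≠ q' →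
    p.1 = p'.1 → q.1 = q'.1 → p.2 - q.2 = p'.2 - q'.2 → A = B ∧ p = p' ∧ q = q'

lemma nodup_Delta_iff {C : Finset (Finset (Fin m × ZMod n))} :
    (∀ i j, (Delta i j C).Nodup) ↔ HasUniqueDifferences C := by
  simp only [Multiset.nodup_iff_count_le_one, count_Delta, card_le_one]
  constructor
  · intro h A hA B hB p hp q hq p' hp' q' hq' hpq hpq' h1 h2 h3
    have := h p.1 q.1 (p.2 - q.2) ⟨A, (p, q)⟩ (by simp [diffPairs, *])
      ⟨B, (p', q')⟩ (by simp [diffPairs, *])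
    simpa using this
  · rintro h i j z ⟨A, p, q⟩ hApq ⟨B, p', q'⟩ hBpq
    simp only [mem_sigma, diffPairs, mem_filter, mem_product] at hApq hBpq
    obtain ⟨hA, ⟨hp, hq⟩, ⟨hpq, rfl, rfl⟩, rfl⟩ := hApq
    obtain ⟨hB, ⟨hp', hq'⟩, ⟨hpq', hi, hj⟩, hz⟩ := hBpq
    obtain ⟨rfl, rfl, rfl⟩ := h A hA B hB p hp q hq p' hp' q' hq' hpq hpq' hi.symm hj.symm hz
    rfl

lemma HasUniqueDifferences.eq_of_one_lt_card_inter {C : Finset (Finset (Fin m × ZMod n))}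
    (hC : HasUniqueDifferences C) {A B : Finset (Fin m × ZMod n)} (hA : A ∈ C) (hB : B ∈ C)
    {τ : ZMod n} (h : 1 < #(A ∩ OOCshift B τ)) : A = B ∧ τ = 0 := by
  obtain ⟨p, hp, q, hq, hpq⟩ := one_lt_card.mp h
  rw [mem_inter, mem_OOCshift] at hp hq
  have hpq' : (p.1, p.2 - τ) ≠ (q.1, q.2 - τ) := by simpa [Prod.ext_iff] using hpq
  obtain ⟨hAB, hp', -⟩ :=
    hC A hA B hB p hp.1 q hq.1 _ hp.2 _ hq.2 hpq hpq' rfl rfl (by ring)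
  exact ⟨hAB, by linear_combination congrArg Prod.snd hp'⟩

lemma isOOC_one_iff_hasUniqueDifferences {k : ℕ} {C : Finset (Finset (Fin m × ZMod n))} :
    IsOOC m n k 1 C ↔ (∀ A ∈ C, #A = k) ∧ HasUniqueDifferences C := by
  refine ⟨fun hC => ⟨hC.1, ?_⟩, fun ⟨hcard, hC⟩ => ⟨hcard, ?_, ?_⟩⟩
  · intro A hA B hB p hp q hq p' hp' q' hq' hpq _ h1 h2 h3
    set τ := p.2 - p'.2
    have hpB : p ∈ OOCshift B τ := by
      rwa [mem_OOCshift, show (p.1, p.2 - τ) = p' from Prod.ext h1 (by ring)]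
    have hqB : q ∈ OOCshift B τ := by
      rwa [mem_OOCshift, show (q.1, q.2 - τ) = q' from Prod.ext h2 (by linear_combination -h3)]
    have hinter : 1 < #(A ∩ OOCshift B τ) :=
      one_lt_card.mpr ⟨p, mem_inter.mpr ⟨hp, hpB⟩, q, mem_inter.mpr ⟨hq, hqB⟩, hpq⟩
    obtain rfl : A = B := by
      by_contra hAB
      exact (hC.2.2 A hA B hB hAB τ).not_gt hinter
    have hτ : τ = 0 := by
      by_contra hτ
      exact (hC.2.1 A hA τ hτ).not_gt hinter
    refine ⟨rfl, Prod.ext h1 ?_, Prod.ext h2 ?_⟩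
    · linear_combination hτ
    · linear_combination hτ - h3
  · intro A hA τ hτ
    by_contra! h
    exact hτ (hC.eq_of_one_lt_card_inter hA hA h).2
  · intro A hA B hB hAB τ
    by_contra! h
    exact hAB (hC.eq_of_one_lt_card_inter hA hB h).1

lemma isOOC_one_iff {k : ℕ} {C : Finset (Finset (Fin m × ZMod n))} :
    IsOOC m n k 1 C ↔ (∀ A ∈ C, #A = k) ∧ ∀ i j, (Delta i j C).Nodup := by
  rw [isOOC_one_iff_hasUniqueDifferences, nodup_Delta_iff]

end Differences

namespace IsGRegOOC

variable {m n k g : ℕ} {R : Finset (Fin m)} {C D : Finset (Finset (Fin m × ZMod n))}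

lemma nodup_Delta (hC : IsGRegOOC k g R C) (i j : Fin m) : (Delta i j C).Nodup :=
  Multiset.nodup_iff_count_le_one.mpr fun z => by rw [hC.2]; split_ifs <;> simp

lemma smul_ne_zero_of_mem_Delta (hC : IsGRegOOC k g R C) {i j : Fin m} {z : ZMod n}
    (hz : z ∈ Delta i j C) : g • z ≠ 0 := by
  intro hgz
  have := Multiset.count_pos.mpr hz
  simp [hC.2, hgz] at this

lemma Delta_eq_zero (hC : IsGRegOOC k g R C) {i j : Fin m} (hi : i ∈ R) (hj : j ∈ R) :
    Delta i j C = 0 := by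
  ext z
  simp [hC.2, hi, hj]

lemma disjoint (hC : IsGRegOOC k g R C) (hk : 2 ≤ k)
    (hD : ∀ i j, ∀ z ∈ Delta i j D, g • z = 0) : Disjoint C D := by
  refine disjoint_left.mpr fun A hAC hAD => ?_
  obtain ⟨p, hp, q, hq, hpq⟩ := one_lt_card.mp ((hC.1 A hAC).symm ▸ hk)
  exact hC.smul_ne_zero_of_mem_Delta (mem_Delta hAC hp hq hpq)
    (hD _ _ _ (mem_Delta hAD hp hq hpq))

lemma isOOC_union (hC : IsGRegOOC k g R C) (hD : IsOOC m n k 1 D)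
    (hDH : ∀ i j, ∀ z ∈ Delta i j D, g • z = 0) (hCD : Disjoint C D) :
    IsOOC m n k 1 (C ∪ D) := by
  rw [isOOC_one_iff] at hD ⊢
  refine ⟨fun A hA => (mem_union.mp hA).elim (hC.1 A) (hD.1 A), fun i j => ?_⟩
  rw [Delta_union hCD, Multiset.nodup_add]
  exact ⟨hC.nodup_Delta i j, hD.2 i j, Multiset.disjoint_left.mpr fun hzC hzD =>
    hC.smul_ne_zero_of_mem_Delta hzC (hDH i j _ hzD)⟩

end IsGRegOOC

section Relabel

variable {m m' g n : ℕ} (σ : Fin m ≃ Fin m') (φ : ZMod g →+ ZMod n) (hφ : Function.Injective φ)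

def relabel (C : Finset (Finset (Fin m × ZMod g))) : Finset (Finset (Fin m' × ZMod n)) :=
  C.map (mapEmbedding (σ.toEmbedding.prodMap ⟨φ, hφ⟩)).toEmbedding

lemma card_relabel (C : Finset (Finset (Fin m × ZMod g))) : #(relabel σ φ hφ C) = #C :=
  card_map _

lemma Delta_relabel (i j : Fin m') (C : Finset (Finset (Fin m × ZMod g))) :
    Delta i j (relabel σ φ hφ C) = (Delta (σ.symm i) (σ.symm j) C).map φ := by
  rw [Delta, Delta, relabel, sum_map, ← Multiset.coe_mapAddMonoidHom φ, map_sum]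
  refine sum_congr rfl fun B _ => ?_
  rw [RelEmbedding.coe_toEmbedding, mapEmbedding_apply, ← prodMap_map_product, filter_map,
    map_val, Multiset.map_map, Multiset.coe_mapAddMonoidHom, Multiset.map_map]
  refine Multiset.map_congr (congrArg _ (filter_congr fun pq _ => ?_)) fun pq _ => ?_
  · obtain ⟨⟨a, x⟩, ⟨b, y⟩⟩ := pq
    simp only [ne_eq, Prod.ext_iff, Function.Embedding.coe_prodMap, Function.Embedding.coeFn_mk,
      Function.comp_apply, Prod.map_apply, EmbeddingLike.apply_eq_iff_eq, hφ.eq_iff,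
      ← Equiv.eq_symm_apply]
  · simp

lemma isOOC_relabel {k : ℕ} {C : Finset (Finset (Fin m × ZMod g))} (hC : IsOOC m g k 1 C) :
    IsOOC m' n k 1 (relabel σ φ hφ C) := by
  rw [isOOC_one_iff] at hC ⊢
  refine ⟨fun A hA => ?_, fun i j => ?_⟩
  · obtain ⟨B, hB, rfl⟩ := mem_map.mp hA
    simpa using hC.1 B hB
  · rw [Delta_relabel]
    exact (hC.2 _ _).map hφ

lemma smul_eq_zero_of_mem_Delta_relabel {C : Finset (Finset (Fin m × ZMod g))} {i j : Fin m'}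
    {z : ZMod n} (hz : z ∈ Delta i j (relabel σ φ hφ C)) : g • z = 0 := by
  rw [Delta_relabel] at hz
  obtain ⟨w, -, rfl⟩ := Multiset.mem_map.mp hz
  rw [← map_nsmul, nsmul_eq_mul, ZMod.natCast_self, zero_mul, map_zero]

lemma Delta_relabel_eq_zero {R : Finset (Fin m)} {C : Finset (Finset (Fin m × ZMod g))}
    (hC : ∀ i ∈ R, ∀ j ∈ R, Delta i j C = 0) :
    ∀ i ∈ R.map σ.toEmbedding, ∀ j ∈ R.map σ.toEmbedding, Delta i j (relabel σ φ hφ C) = 0 := by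
  simp only [mem_map_equiv]
  intro i hi j hj
  rw [Delta_relabel, hC _ hi _ hj, Multiset.map_zero]

end Relabel

lemma ZMod.exists_injective_addMonoidHom {g n : ℕ} (hn : n ≠ 0) (hgn : g ∣ n) :
    ∃ φ : ZMod g →+ ZMod n, Function.Injective φ := by
  obtain ⟨d, rfl⟩ := hgn
  have hd : (d : ℤ) ≠ 0 := by exact_mod_cast right_ne_zero_of_mul hn
  refine ⟨ZMod.lift g ⟨zmultiplesHom _ (d : ZMod (g * d)), ?_⟩,
    (ZMod.lift_injective g).mpr fun a ha => ?_⟩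
  · simp [← Nat.cast_mul]
  · have hdvd : ((g * d : ℕ) : ℤ) ∣ a * d := by
      rwa [zmultiplesHom_apply, zsmul_eq_mul, ← Int.cast_natCast, ← Int.cast_mul,
        ZMod.intCast_zmod_eq_zero_iff_dvd] at ha
    rw [ZMod.intCast_zmod_eq_zero_iff_dvd]
    exact (mul_dvd_mul_iff_right hd).mp (by exact_mod_cast hdvd)

theorem stmt_6_general (m n k g r b : ℕ) (hn : 0 < n)
    (hgn : g ∣ n)
    (h1 : ∃ (R : Finset (Fin m)) (C : Finset (Finset (Fin m × ZMod n))),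
        R.card = r ∧ IsGRegOOC k g R C ∧
        C.card = (m ^ 2 - r ^ 2) * (n - g) / (k * (k - 1)))
    (h2 : ∃ (R : Finset (Fin m)) (C : Finset (Finset (Fin m × ZMod g))),
        R.card = r ∧ IsOOC m g k 1 C ∧ (∀ i ∈ R, ∀ j ∈ R, Delta i j C = 0) ∧
        C.card = b) :
    ∃ (R : Finset (Fin m)) (C : Finset (Finset (Fin m × ZMod n))),
      R.card = r ∧ IsOOC m n k 1 C ∧ (∀ i ∈ R, ∀ j ∈ R, Delta i j C = 0) ∧
      C.card = (m ^ 2 - r ^ 2) * (n - g) / (k * (k - 1)) + b := by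
  obtain ⟨R, C, hR, hC, hCcard⟩ := h1
  obtain ⟨R', C', hR', hC', hC'hole, hC'card⟩ := h2
  obtain ⟨σ, hσ⟩ := Equiv.Perm.exists_map_finset_eq R' R (hR'.trans hR.symm)
  obtain ⟨φ, hφ⟩ := ZMod.exists_injective_addMonoidHom hn.ne' hgn
  set D := relabel σ φ hφ C'
  have hDH : ∀ i j, ∀ z ∈ Delta i j D, g • z = 0 := fun i j z =>
    smul_eq_zero_of_mem_Delta_relabel σ φ hφ
  have hCD : Disjoint C D := by
    rcases lt_or_ge k 2 with hk | hk
    · -- for `k ≤ 1` the prescribed size divides by `k (k - 1) = 0`, so `C` is empty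
      have hk0 : k * (k - 1) = 0 := Nat.mul_eq_zero.mpr (Or.inr (by omega))
      have hC0 : C = ∅ := card_eq_zero.mp (by rw [hCcard, hk0, Nat.div_zero])
      exact hC0 ▸ disjoint_empty_left D
    · exact hC.disjoint hk hDH
  refine ⟨R, C ∪ D, hR, hC.isOOC_union (isOOC_relabel σ φ hφ hC') hDH hCD,
    fun i hi j hj => ?_, ?_⟩
  · rw [Delta_union hCD, hC.Delta_eq_zero hi hj, zero_add]
    exact Delta_relabel_eq_zero σ φ hφ hC'hole i (hσ ▸ hi) j (hσ ▸ hj)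
  · rw [card_union_of_disjoint hCD, hCcard, card_relabel, hC'card]

theorem stmt_6 (m n k g r b : ℕ) (hm : 0 < m) (hn : 0 < n) (hk : 0 < k) (hg : 0 < g)
    (hgn : g ∣ n) (hrm : r ≤ m)
    (h1 : ∃ (R : Finset (Fin m)) (C : Finset (Finset (Fin m × ZMod n))),
        R.card = r ∧ IsGRegOOC k g R C ∧
        C.card = (m ^ 2 - r ^ 2) * (n - g) / (k * (k - 1)))
    (h2 : ∃ (R : Finset (Fin m)) (C : Finset (Finset (Fin m × ZMod g))),
        R.card = r ∧ IsOOC m g k 1 C ∧ (∀ i ∈ R, ∀ j ∈ R, Delta i j C = 0) ∧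
        C.card = b) :
    ∃ (R : Finset (Fin m)) (C : Finset (Finset (Fin m × ZMod n))),
      R.card = r ∧ IsOOC m n k 1 C ∧ (∀ i ∈ R, ∀ j ∈ R, Delta i j C = 0) ∧
      C.card = (m ^ 2 - r ^ 2) * (n - g) / (k * (k - 1)) + b :=
  stmt_6_general m n k g r b hn hgn h1 h2
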